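/- The following are equivalent: (a) every zero of ζ in the critical strip S has real part 1/2 and is simple (the Riemann hypothesis together with the simplicity hypothesis); (c) ν_ζ has no attracting fixed point, i.e. every zero α ∈ ℂ of ζ, of order m, satisfies |1 − 1/(mα)| ≥ 1. -/

import Mathlib

/-!
For a zero `α ≠ 0` of order `m`, `|1 - 1/(mα)| ≥ 1` is equivalent to `2 m Re α ≤ 1`, which is
automatic when `Re α ≤ 0`; since `ζ` has no zeros with `Re α ≥ 1`, condition (c) only constrains
the zeros in the critical strip. There `ζ = Λ / Γℝ` with `1 / Γℝ` entire and nonvanishing, so the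
symmetry `Λ (1 - s) = Λ s` gives the zero `1 - α` the same order `m` as `α`. Applying the bound
at both `α` and `1 - α` yields `2 m ≤ 2`, hence `m = 1` and `Re α = 1/2`.
-/

open Complex

/-- The nu function of the Riemann zeta function: `ν_ζ(z) = z - ζ(z)/(z ζ'(z))`. -/
noncomputable def nuZeta (z : ℂ) : ℂ := z - riemannZeta z / (z * deriv riemannZeta z)

open Filter Topology

namespace Complex

theorem ne_one_of_re_lt_one {z : ℂ} (hz : z.re < 1) : z ≠ 1 := by
  rintro rfl
  simp at hz

theorem one_le_norm_one_sub_one_div_iff {w : ℂ} (hw : w ≠ 0) :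
    1 ≤ ‖1 - 1 / w‖ ↔ 2 * w.re ≤ 1 := by
  have hw' : 0 < ‖w‖ := norm_pos_iff.mpr hw
  rw [one_sub_div hw, norm_div, one_le_div hw', ← sq_le_sq₀ hw'.le (norm_nonneg _),
    Complex.sq_norm, Complex.sq_norm, normSq_apply, normSq_apply]
  simp only [sub_re, sub_im, one_re, one_im]
  constructor <;> intro h <;> nlinarith

theorem one_le_norm_one_sub_one_div_natCast_mul_iff {α : ℂ} (hα : α ≠ 0) {m : ℕ} (hm : m ≠ 0) :
    1 ≤ ‖1 - 1 / (m * α)‖ ↔ 2 * m * α.re ≤ 1 := by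
  rw [one_le_norm_one_sub_one_div_iff (mul_ne_zero (Nat.cast_ne_zero.mpr hm) hα), mul_assoc]
  simp only [mul_re, natCast_re, natCast_im, zero_mul, sub_zero]

end Complex

theorem analyticOrderAt_eq_of_eqOn_pow_mul {f h : ℂ → ℂ} {U : Set ℂ} {α : ℂ} {m : ℕ}
    (hU : IsOpen U) (hαU : α ∈ U) (hh : DifferentiableOn ℂ h U) (hhα : h α ≠ 0)
    (hfac : ∀ z ∈ U, f z = (z - α) ^ m * h z) :
    analyticOrderAt f α = m := by
  have hfac' : f =ᶠ[𝓝 α] fun z ↦ (z - α) ^ m * h z := eventually_of_mem (hU.mem_nhds hαU) hfac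
  have hhα' : AnalyticAt ℂ h α := hh.analyticAt (hU.mem_nhds hαU)
  have hf : AnalyticAt ℂ f α := (analyticAt_congr hfac').mpr (by fun_prop)
  exact hf.analyticOrderAt_eq_natCast.mpr ⟨h, hhα', hhα, hfac'⟩

theorem AnalyticAt.exists_eqOn_pow_mul_of_analyticOrderAt_eq {f : ℂ → ℂ} {α : ℂ} {m : ℕ}
    (hf : AnalyticAt ℂ f α) (hm : analyticOrderAt f α = m) :
    ∃ (h : ℂ → ℂ) (U : Set ℂ), IsOpen U ∧ α ∈ U ∧ DifferentiableOn ℂ h U ∧ h α ≠ 0 ∧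
      ∀ z ∈ U, f z = (z - α) ^ m * h z := by
  obtain ⟨h, hh, hhα, hfac⟩ := hf.analyticOrderAt_eq_natCast.mp hm
  obtain ⟨U, hUprop, hU, hαU⟩ := eventually_nhds_iff.mp (hh.eventually_analyticAt.and hfac)
  exact ⟨h, U, hU, hαU, fun z hz ↦ (hUprop z hz).1.differentiableAt.differentiableWithinAt, hhα,
    fun z hz ↦ by simpa using (hUprop z hz).2⟩

theorem analyticOrderAt_riemannZeta_ne_top {s : ℂ} (hs : s ≠ 1) :
    analyticOrderAt riemannZeta s ≠ ⊤ := by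
  have hζ2 : analyticOrderAt riemannZeta 2 = 0 :=
    analyticOrderAt_eq_zero.mpr (Or.inr (riemannZeta_ne_zero_of_one_lt_re (by norm_num)))
  exact analyticOn_riemannZeta.analyticOrderAt_ne_top_of_isPreconnected
    (isConnected_compl_singleton_of_one_lt_rank (by simp) 1).isPreconnected
    (by norm_num : (2 : ℂ) ≠ 1) hs (by simp [hζ2])

theorem analyticAt_completedRiemannZeta {s : ℂ} (hs₀ : s ≠ 0) (hs₁ : s ≠ 1) :
    AnalyticAt ℂ completedRiemannZeta s := by
  refine Complex.analyticAt_iff_eventually_differentiableAt.mpr ?_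
  filter_upwards [isOpen_ne.mem_nhds hs₀, isOpen_ne.mem_nhds hs₁] with z hz₀ hz₁
  exact differentiableAt_completedZeta hz₀ hz₁

theorem analyticOrderAt_completedRiemannZeta_one_sub (s : ℂ) :
    analyticOrderAt completedRiemannZeta (1 - s) = analyticOrderAt completedRiemannZeta s := by
  have hcomp : completedRiemannZeta ∘ (fun z ↦ 1 - z) = completedRiemannZeta :=
    funext completedRiemannZeta_one_sub
  have hderiv : deriv (fun z : ℂ ↦ 1 - z) s ≠ 0 := by simp
  rw [← analyticOrderAt_comp_of_deriv_ne_zero (by fun_prop) hderiv, hcomp]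

theorem analyticOrderAt_riemannZeta_eq_completedRiemannZeta {s : ℂ} (hs : 0 < s.re)
    (hs₁ : s ≠ 1) :
    analyticOrderAt riemannZeta s = analyticOrderAt completedRiemannZeta s := by
  have hs₀ : s ≠ 0 := by rintro rfl; simp at hs
  have hζ : riemannZeta =ᶠ[𝓝 s] completedRiemannZeta * fun z ↦ (Gammaℝ z)⁻¹ := by
    filter_upwards [isOpen_ne.mem_nhds hs₀] with z hz
    rw [riemannZeta_def_of_ne_zero hz, Pi.mul_apply, div_eq_mul_inv]
  have hΓ : analyticOrderAt (fun z ↦ (Gammaℝ z)⁻¹) s = 0 :=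
    analyticOrderAt_eq_zero.mpr (Or.inr (inv_ne_zero (Gammaℝ_ne_zero_of_re_pos hs)))
  rw [analyticOrderAt_congr hζ, analyticOrderAt_mul (analyticAt_completedRiemannZeta hs₀ hs₁)
    (differentiable_Gammaℝ_inv.analyticAt s), hΓ, add_zero]

theorem analyticOrderAt_riemannZeta_one_sub {s : ℂ} (hs₀ : 0 < s.re) (hs₁ : s.re < 1) :
    analyticOrderAt riemannZeta (1 - s) = analyticOrderAt riemannZeta s := by
  rw [analyticOrderAt_riemannZeta_eq_completedRiemannZeta (by simpa using hs₁)
      (ne_one_of_re_lt_one (by simpa using hs₀)),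
    analyticOrderAt_completedRiemannZeta_one_sub,
    analyticOrderAt_riemannZeta_eq_completedRiemannZeta hs₀ (ne_one_of_re_lt_one hs₁)]

theorem exists_analyticOrderAt_riemannZeta_eq_of_eq_zero {s : ℂ} (hs : s ≠ 1)
    (hζ : riemannZeta s = 0) : ∃ n : ℕ, 1 ≤ n ∧ analyticOrderAt riemannZeta s = n := by
  obtain ⟨n, hn⟩ := ENat.ne_top_iff_exists.mp (analyticOrderAt_riemannZeta_ne_top hs)
  refine ⟨n, Nat.one_le_iff_ne_zero.mpr fun hn₀ ↦ ?_, hn.symm⟩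
  exact analyticOrderAt_ne_zero.mpr ⟨analyticOn_riemannZeta s hs, hζ⟩
    (by rw [← hn, hn₀, Nat.cast_zero])

theorem eq_one_and_eq_half_of_two_mul_le_one {n : ℕ} {x : ℝ} (hn : 1 ≤ n)
    (h₁ : 2 * n * x ≤ 1) (h₂ : 2 * n * (1 - x) ≤ 1) : n = 1 ∧ x = 1 / 2 := by
  have hn' : (1 : ℝ) ≤ n := by exact_mod_cast hn
  have hn_eq : n = 1 := by
    have : (n : ℝ) ≤ 1 := by nlinarith
    exact_mod_cast le_antisymm this hn'
  subst hn_eq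
  norm_num at h₁ h₂
  exact ⟨rfl, by linarith⟩

/-- (a) The Riemann hypothesis together with the simplicity hypothesis (every zero of `ζ`
in the critical strip has real part `1/2` and order `1`) holds if and only if
(c) `ν_ζ` has no attracting fixed point, i.e. every zero `α ∈ ℂ` of `ζ`, of order `m`,
satisfies `|1 - 1/(mα)| ≥ 1`. -/
theorem RH_simplicity_iff_no_attracting :
    (∀ (α : ℂ), 0 < α.re → α.re < 1 → riemannZeta α = 0 →
      α.re = 1 / 2 ∧
      ∀ (m : ℕ), 1 ≤ m → ∀ (h : ℂ → ℂ) (U : Set ℂ), IsOpen U → α ∈ U →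
        DifferentiableOn ℂ h U → h α ≠ 0 →
        (∀ z ∈ U, riemannZeta z = (z - α) ^ m * h z) → m = 1) ↔
    (∀ (α : ℂ) (m : ℕ), 1 ≤ m →
      ∀ (h : ℂ → ℂ) (U : Set ℂ), IsOpen U → α ∈ U → DifferentiableOn ℂ h U → h α ≠ 0 →
      (∀ z ∈ U, riemannZeta z = (z - α) ^ m * h z) →
      1 ≤ ‖(1 - 1 / (m * α) : ℂ)‖) := by
  constructor
  · intro hRH α m hm h U hU hαU hh hhα hfac
    have hζ : riemannZeta α = 0 := by simpa [zero_pow (by omega : m ≠ 0)] using hfac α hαU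
    have hα : α ≠ 0 := by rintro rfl; norm_num [riemannZeta_zero] at hζ
    rw [Complex.one_le_norm_one_sub_one_div_natCast_mul_iff hα (by omega)]
    rcases le_or_gt α.re 0 with hre | hre
    · nlinarith [(Nat.cast_nonneg m : (0 : ℝ) ≤ m)]
    have hre₁ : α.re < 1 := not_le.mp fun h ↦ riemannZeta_ne_zero_of_one_le_re h hζ
    obtain ⟨hhalf, hsimple⟩ := hRH α hre hre₁ hζ
    rw [hsimple m hm h U hU hαU hh hhα hfac, hhalf]
    norm_num
  · intro hc α hre₀ hre₁ hζ
    obtain ⟨n, hn₁, hn⟩ :=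
      exists_analyticOrderAt_riemannZeta_eq_of_eq_zero (Complex.ne_one_of_re_lt_one hre₁) hζ
    have hbound {β : ℂ} (hβ₀ : 0 < β.re) (hβ₁ : β.re < 1)
        (hβ : analyticOrderAt riemannZeta β = n) : 2 * n * β.re ≤ 1 := by
      obtain ⟨h, U, hU, hβU, hh, hhβ, hfac⟩ := (analyticOn_riemannZeta β
        (Complex.ne_one_of_re_lt_one hβ₁)).exists_eqOn_pow_mul_of_analyticOrderAt_eq hβ
      exact (Complex.one_le_norm_one_sub_one_div_natCast_mul_iff (by rintro rfl; simp at hβ₀)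
        (by omega)).mp (hc β n hn₁ h U hU hβU hh hhβ hfac)
    have hα' := hbound (β := 1 - α) (by simpa using hre₁) (by simpa using hre₀)
      (by rw [analyticOrderAt_riemannZeta_one_sub hre₀ hre₁, hn])
    rw [sub_re, one_re] at hα'
    obtain ⟨rfl, hhalf⟩ := eq_one_and_eq_half_of_two_mul_le_one hn₁ (hbound hre₀ hre₁ hn) hα'
    refine ⟨hhalf, fun m _ h U hU hαU hh hhα hfac ↦ ?_⟩
    exact_mod_cast (analyticOrderAt_eq_of_eqOn_pow_mul hU hαU hh hhα hfac).symm.trans hn
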